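/- arXiv:1505.04093 — 2 statements merged into one kernel-verified Lean document; each statement's English description precedes it below -/
import Mathlib

section
/- For each i ∈ {1,…,2m}, j ∈ {1,…,n} and every (u,v) ∈ g↑ ∩ LB_ij, the set S = {(u',v') ∈ g↑ ∩ TR_ij : u' ≥ u and v' ≥ v} is nonempty and has a ≼-greatest element (u*,v*), and r↑(u,v) = r↑(u*,v*). -/
open Set

noncomputable section

/-- The piecewise linear closed curve through the vertices `x 0, x 1, …`:
`f(i+α) = (1-α) • x i + α • x (i+1)`. -/
def fCurve {k : ℕ} (x : ℕ → EuclideanSpace ℝ (Fin k)) (t : ℝ) :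
    EuclideanSpace ℝ (Fin k) :=
  (1 - Int.fract t) • x (⌊t⌋.toNat) + Int.fract t • x (⌊t⌋.toNat + 1)

/-- The extension of the curve from `[0,m]` to `[0,2m]` by `f(u) = f(u-m)` for `u > m`. -/
def fCurveExt {k : ℕ} (m : ℕ) (x : ℕ → EuclideanSpace ℝ (Fin k)) (u : ℝ) :
    EuclideanSpace ℝ (Fin k) :=
  if u ≤ m then fCurve x u else fCurve x (u - m)

/-- The rectangle `D = [0,2m] × [0,n]`. -/
def Dfull (m n : ℕ) : Set (ℝ × ℝ) :=
  Icc (0:ℝ) (2*(m:ℝ)) ×ˢ Icc (0:ℝ) (n:ℝ)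

/-- The free space `D_ε = {(u,v) ∈ D : dist (f_X u) (f_Y v) ≤ ε}`. -/
def Dfree {k : ℕ} (m n : ℕ) (x y : ℕ → EuclideanSpace ℝ (Fin k)) (ε : ℝ) :
    Set (ℝ × ℝ) :=
  {p ∈ Dfull m n | dist (fCurveExt m x p.1) (fCurve y p.2) ≤ ε}

/-- The top side `T = [0,2m] × {n}` of `D`. -/
def Tside (m n : ℕ) : Set (ℝ × ℝ) := Icc (0:ℝ) (2*(m:ℝ)) ×ˢ {(n:ℝ)}

/-- The bottom side `B = [0,2m] × {0}` of `D`. -/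
def Bside (m : ℕ) : Set (ℝ × ℝ) := Icc (0:ℝ) (2*(m:ℝ)) ×ˢ {(0:ℝ)}

/-- A monotone (non-decreasing) path: a connected subset `γ ⊆ Dε` with
`(u-u')·(v-v') ≥ 0` for all `(u,v), (u',v') ∈ γ`. -/
def IsMonPath (Dε γ : Set (ℝ × ℝ)) : Prop :=
  γ ⊆ Dε ∧ IsConnected γ ∧
    ∀ p ∈ γ, ∀ q ∈ γ, (p.1 - q.1) * (p.2 - q.2) ≥ 0

/-- Two points are mutually reachable if some monotone path contains both. -/
def Reach (Dε : Set (ℝ × ℝ)) (p q : ℝ × ℝ) : Prop :=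
  ∃ γ : Set (ℝ × ℝ), IsMonPath Dε γ ∧ p ∈ γ ∧ q ∈ γ

/-- `g↓`: the points of `Dε` mutually reachable with at least one point of `B`. -/
def gDown (m : ℕ) (Dε : Set (ℝ × ℝ)) : Set (ℝ × ℝ) :=
  {p ∈ Dε | ∃ q ∈ Bside m, Reach Dε p q}

/-- `g↑`: the points of `Dε` mutually reachable with at least one point of `T`. -/
def gUp (m n : ℕ) (Dε : Set (ℝ × ℝ)) : Set (ℝ × ℝ) :=
  {p ∈ Dε | ∃ q ∈ Tside m n, Reach Dε p q}

/-- The pointer `r↑(p)`: the maximum `u* ∈ [0,2m]` such that `p` and `(u*, n)`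
are mutually reachable. -/
def rUp (m n : ℕ) (Dε : Set (ℝ × ℝ)) (p : ℝ × ℝ) : ℝ :=
  sSup {u : ℝ | u ∈ Icc (0:ℝ) (2*(m:ℝ)) ∧ Reach Dε p (u, (n:ℝ))}

/-- The pointer `r↓(p)`: for `p` with `p.2 > 0`, the maximum `u* ∈ [0,2m]` such
that `p` and `(u*, 0)` are mutually reachable; on the bottom side `r↓(u,0) = u`. -/
def rDown (m : ℕ) (Dε : Set (ℝ × ℝ)) (p : ℝ × ℝ) : ℝ :=
  if p.2 = 0 then p.1
  else sSup {u : ℝ | u ∈ Icc (0:ℝ) (2*(m:ℝ)) ∧ Reach Dε p (u, (0:ℝ))}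

/-- The cell `D_ij = [i-1,i] × [j-1,j]`. -/
def cellD (i j : ℕ) : Set (ℝ × ℝ) :=
  Icc ((i:ℝ)-1) (i:ℝ) ×ˢ Icc ((j:ℝ)-1) (j:ℝ)

/-- The top side `T_ij` of the cell `D_ij`. -/
def cellT (i j : ℕ) : Set (ℝ × ℝ) := Icc ((i:ℝ)-1) (i:ℝ) ×ˢ {(j:ℝ)}

/-- The bottom side `B_ij` of the cell `D_ij`. -/
def cellB (i j : ℕ) : Set (ℝ × ℝ) := Icc ((i:ℝ)-1) (i:ℝ) ×ˢ {((j:ℝ)-1)}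

/-- The right side `R_ij` of the cell `D_ij`. -/
def cellR (i j : ℕ) : Set (ℝ × ℝ) := {(i:ℝ)} ×ˢ Icc ((j:ℝ)-1) (j:ℝ)

/-- The left side `L_ij` of the cell `D_ij`. -/
def cellL (i j : ℕ) : Set (ℝ × ℝ) := {((i:ℝ)-1)} ×ˢ Icc ((j:ℝ)-1) (j:ℝ)

/-- The partial order `≼` on `D`: `(u1,v1) ≼ (u2,v2)` iff `u1 ≤ u2` and `v1 ≥ v2`. -/
def prec (p q : ℝ × ℝ) : Prop := p.1 ≤ q.1 ∧ q.2 ≤ p.2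

/-!
Inside a cell both curves are affine, so the free space there is convex. Parametrizing monotone
paths by `u + v` makes them uniformly 1-Lipschitz, so reachability is a closed relation and `g↑`
is compact. The points of `g↑ ∩ TR_ij` above `p` thus form a compact subset of the `≼`-chain
`TR_ij`, and the one maximizing `u - v` is `≼`-greatest. Its pointer equals that of `p`: `p` reaches
`q` along a segment of the convex cell, so `r↑(q) ≤ r↑(p)`; conversely, an arc from `p` to a top
point beyond `r↑(q)` leaves the cell through a point `w ≼ q` of `TR_ij`, and must then cross the arc
from `q` to the top, so `q` reaches that top point as well.
-/

open Filter Topology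

lemma dist_le_sum_sub_sum_of_le {p q : ℝ × ℝ} (h : p ≤ q) :
    dist p q ≤ (q.1 + q.2) - (p.1 + p.2) := by
  obtain ⟨h1, h2⟩ := h
  rw [Prod.dist_eq, Real.dist_eq, Real.dist_eq, abs_sub_comm, abs_of_nonneg (sub_nonneg.2 h1),
    abs_sub_comm, abs_of_nonneg (sub_nonneg.2 h2)]
  exact max_le (by linarith) (by linarith)

/-- Arcs are parametrized by the coordinate sum `u + v`, so that two arcs evaluated at the same
parameter coincide as soon as their first coordinates agree. -/
structure IsMonoArc (K : Set (ℝ × ℝ)) (a b : ℝ × ℝ) (φ : ℝ → ℝ × ℝ) : Prop where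
  monotone : Monotone φ
  lipschitz : LipschitzWith 1 φ
  mem : ∀ σ, φ σ ∈ K
  sum_le : a.1 + a.2 ≤ b.1 + b.2
  apply_left : φ (a.1 + a.2) = a
  apply_right : φ (b.1 + b.2) = b
  sum_apply : ∀ σ ∈ Icc (a.1 + a.2) (b.1 + b.2), (φ σ).1 + (φ σ).2 = σ

def ArcReach (K : Set (ℝ × ℝ)) (a b : ℝ × ℝ) : Prop := ∃ φ, IsMonoArc K a b φ

theorem arcReach_of_monotoneOn {K : Set (ℝ × ℝ)} {g : ℝ → ℝ × ℝ} {s t : ℝ} (hst : s ≤ t)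
    (hmono : MonotoneOn g (Icc s t)) (hsum : ∀ σ ∈ Icc s t, (g σ).1 + (g σ).2 = σ)
    (hK : ∀ σ ∈ Icc s t, g σ ∈ K) : ArcReach K (g s) (g t) := by
  have hlip : LipschitzWith 1 (fun σ : Icc s t => g σ) := by
    refine LipschitzWith.of_dist_le_mul fun σ τ => ?_
    wlog hστ : σ ≤ τ generalizing σ τ
    · simpa only [dist_comm] using this τ σ (le_of_not_ge hστ)
    have := dist_le_sum_sub_sum_of_le (hmono σ.2 τ.2 hστ)
    rw [hsum σ σ.2, hsum τ τ.2] at this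
    rwa [NNReal.coe_one, one_mul, Subtype.dist_eq, Real.dist_eq, abs_sub_comm,
      abs_of_nonneg (sub_nonneg.2 (Subtype.coe_le_coe.2 hστ))]
  have hext : ∀ σ ∈ Icc s t, IccExtend hst (fun σ => g σ) σ = g σ := fun σ hσ =>
    IccExtend_of_mem hst _ hσ
  have hs := hsum s (left_mem_Icc.2 hst)
  have ht := hsum t (right_mem_Icc.2 hst)
  refine ⟨IccExtend hst (fun σ => g σ), ⟨?_, ?_, ?_, ?_, ?_, ?_, ?_⟩⟩
  · exact Monotone.IccExtend hst fun σ τ h => hmono σ.2 τ.2 h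
  · have := hlip.comp (LipschitzWith.projIcc hst)
    rw [mul_one] at this
    exact this
  · exact fun σ => hK _ (projIcc s t hst σ).2
  · rw [hs, ht]; exact hst
  · rw [hs]; exact hext s (left_mem_Icc.2 hst)
  · rw [ht]; exact hext t (right_mem_Icc.2 hst)
  · rw [hs, ht]
    intro σ hσ
    rw [hext σ hσ, hsum σ hσ]

namespace IsMonoArc

variable {K : Set (ℝ × ℝ)} {a b : ℝ × ℝ} {φ : ℝ → ℝ × ℝ}

theorem le_apply (h : IsMonoArc K a b φ) {σ : ℝ} (hσ : a.1 + a.2 ≤ σ) : a ≤ φ σ :=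
  h.apply_left ▸ h.monotone hσ

theorem apply_le (h : IsMonoArc K a b φ) {σ : ℝ} (hσ : σ ≤ b.1 + b.2) : φ σ ≤ b :=
  h.apply_right ▸ h.monotone hσ

theorem restrict (h : IsMonoArc K a b φ) {s t : ℝ} (hs : a.1 + a.2 ≤ s) (hst : s ≤ t)
    (ht : t ≤ b.1 + b.2) : IsMonoArc K (φ s) (φ t) φ := by
  have hsum : ∀ σ ∈ Icc s t, (φ σ).1 + (φ σ).2 = σ := fun σ hσ =>
    h.sum_apply σ ⟨hs.trans hσ.1, hσ.2.trans ht⟩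
  have hs' := hsum s (left_mem_Icc.2 hst)
  have ht' := hsum t (right_mem_Icc.2 hst)
  refine ⟨h.monotone, h.lipschitz, h.mem, ?_, ?_, ?_, ?_⟩
  · rw [hs', ht']; exact hst
  · rw [hs']
  · rw [ht']
  · rw [hs', ht']; exact hsum

theorem arcReach_left (h : IsMonoArc K a b φ) {σ : ℝ} (hσ : σ ∈ Icc (a.1 + a.2) (b.1 + b.2)) :
    ArcReach K a (φ σ) :=
  ⟨φ, h.apply_left ▸ h.restrict le_rfl hσ.1 hσ.2⟩

theorem arcReach_right (h : IsMonoArc K a b φ) {σ : ℝ} (hσ : σ ∈ Icc (a.1 + a.2) (b.1 + b.2)) :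
    ArcReach K (φ σ) b :=
  ⟨φ, h.apply_right ▸ h.restrict hσ.1 hσ.2 le_rfl⟩

end IsMonoArc

namespace ArcReach

variable {K : Set (ℝ × ℝ)} {a b c : ℝ × ℝ}

theorem le (h : ArcReach K a b) : a ≤ b :=
  let ⟨_, hφ⟩ := h; hφ.le_apply hφ.sum_le |>.trans_eq hφ.apply_right

theorem left_mem (h : ArcReach K a b) : a ∈ K :=
  let ⟨_, hφ⟩ := h; hφ.apply_left ▸ hφ.mem _

theorem right_mem (h : ArcReach K a b) : b ∈ K :=
  let ⟨_, hφ⟩ := h; hφ.apply_right ▸ hφ.mem _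

theorem refl (ha : a ∈ K) : ArcReach K a a :=
  arcReach_of_monotoneOn (g := fun _ => a) (s := a.1 + a.2) le_rfl (fun _ _ _ _ _ => le_rfl)
    (fun _ hσ => le_antisymm hσ.1 hσ.2) (fun _ _ => ha)

theorem trans (hab : ArcReach K a b) (hbc : ArcReach K b c) : ArcReach K a c := by
  obtain ⟨φ, hφ⟩ := hab
  obtain ⟨ψ, hψ⟩ := hbc
  set g : ℝ → ℝ × ℝ := fun σ => if σ ≤ b.1 + b.2 then φ σ else ψ σ
  have hga : g (a.1 + a.2) = a := by simp only [g, if_pos hφ.sum_le, hφ.apply_left]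
  have hgc : g (c.1 + c.2) = c := by
    by_cases hc : c.1 + c.2 ≤ b.1 + b.2
    · have hbc : b.1 + b.2 = c.1 + c.2 := le_antisymm hψ.sum_le hc
      have hbc' : b = c := by rw [← hψ.apply_left, ← hψ.apply_right, hbc]
      simp only [g, if_pos hc]
      rw [← hbc, hφ.apply_right, hbc']
    · simp only [g, if_neg hc, hψ.apply_right]
  rw [← hga, ← hgc]
  refine arcReach_of_monotoneOn (hφ.sum_le.trans hψ.sum_le) ?_ ?_ ?_
  · intro σ _ τ _ hστ
    simp only [g]
    split_ifs with hσ hτ hτ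
    · exact hφ.monotone hστ
    · exact (hφ.apply_le hσ).trans (hψ.le_apply (le_of_not_ge hτ))
    · exact absurd (hστ.trans hτ) hσ
    · exact hψ.monotone hστ
  · intro σ hσ
    simp only [g]
    split_ifs with h
    · exact hφ.sum_apply σ ⟨hσ.1, h⟩
    · exact hψ.sum_apply σ ⟨le_of_not_ge h, hσ.2⟩
  · intro σ _
    simp only [g]
    split_ifs
    exacts [hφ.mem σ, hψ.mem σ]

theorem of_convex {C : Set (ℝ × ℝ)} (hC : Convex ℝ C) (hCK : C ⊆ K) (ha : a ∈ C) (hb : b ∈ C)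
    (hab : a ≤ b) : ArcReach K a b := by
  set L := (b.1 + b.2) - (a.1 + a.2)
  -- if `L = 0` then `a = b`, and `x / 0 = 0` makes `g` the constant `a`
  set g : ℝ → ℝ × ℝ := fun σ => a + ((σ - (a.1 + a.2)) / L) • (b - a)
  have hL : 0 ≤ L := by have := hab.1; have := hab.2; simp only [L]; linarith
  have hcoef : ∀ σ ∈ Icc (a.1 + a.2) (b.1 + b.2), (σ - (a.1 + a.2)) / L ∈ Icc (0:ℝ) 1 :=
    fun σ hσ => ⟨div_nonneg (by linarith [hσ.1]) hL, div_le_one_of_le₀ (by linarith [hσ.2]) hL⟩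
  have hga : g (a.1 + a.2) = a := by simp [g]
  have hgb : g (b.1 + b.2) = b := by
    rcases hL.eq_or_lt with h0 | hpos
    · have : b = a := Prod.ext (by linarith [hab.1, hab.2]) (by linarith [hab.1, hab.2])
      simp [g, this]
    · simp only [g]
      rw [show b.1 + b.2 - (a.1 + a.2) = L from rfl, div_self hpos.ne', one_smul, add_sub_cancel]
  rw [← hga, ← hgb]
  refine arcReach_of_monotoneOn (by linarith) ?_ ?_ ?_
  · intro σ _ τ _ hστ
    simp only [g]
    exact add_le_add le_rfl (smul_le_smul_of_nonneg_right
      (div_le_div_of_nonneg_right (by linarith) hL) (sub_nonneg.2 hab))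
  · intro σ hσ
    rcases hL.eq_or_lt with h0 | hpos
    · simp only [g, ← h0, div_zero, zero_smul, add_zero]; linarith [hσ.1, hσ.2]
    · simp only [g, Prod.fst_add, Prod.snd_add, Prod.smul_fst, Prod.smul_snd, Prod.fst_sub,
        Prod.snd_sub, smul_eq_mul]
      field_simp
      ring
  · exact fun σ hσ => hCK (hC.add_smul_sub_mem ha hb (hcoef σ hσ))

end ArcReach

theorem IsMonPath.le_of_sum_le {K γ : Set (ℝ × ℝ)} (h : IsMonPath K γ) {a b : ℝ × ℝ}
    (ha : a ∈ γ) (hb : b ∈ γ) (hs : a.1 + a.2 ≤ b.1 + b.2) : a ≤ b := by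
  have := h.2.2 a ha b hb
  constructor <;> nlinarith

theorem Reach.arcReach {K : Set (ℝ × ℝ)} {a b : ℝ × ℝ} (h : Reach K a b)
    (hs : a.1 + a.2 ≤ b.1 + b.2) : ArcReach K a b := by
  obtain ⟨γ, hγ, ha, hb⟩ := h
  have hex : ∀ σ ∈ Icc (a.1 + a.2) (b.1 + b.2), ∃ c ∈ γ, c.1 + c.2 = σ := fun σ hσ =>
    hγ.2.1.isPreconnected.intermediate_value ha hb
      (continuous_fst.add continuous_snd).continuousOn hσ
  choose! g hgγ hgsum using hex
  have hg : ∀ {c}, c ∈ γ → ∀ σ ∈ Icc (a.1 + a.2) (b.1 + b.2), c.1 + c.2 = σ → g σ = c :=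
    fun hc σ hσ hcσ => le_antisymm
      (hγ.le_of_sum_le (hgγ σ hσ) hc (by rw [hgsum σ hσ, hcσ]))
      (hγ.le_of_sum_le hc (hgγ σ hσ) (by rw [hgsum σ hσ, hcσ]))
  have := arcReach_of_monotoneOn hs
    (fun σ hσ τ hτ hστ => hγ.le_of_sum_le (hgγ σ hσ) (hgγ τ hτ) (by rwa [hgsum σ hσ, hgsum τ hτ]))
    hgsum (fun σ hσ => hγ.1 (hgγ σ hσ))
  rwa [hg ha _ (left_mem_Icc.2 hs) rfl, hg hb _ (right_mem_Icc.2 hs) rfl] at this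

theorem Reach.arcReach_or_arcReach {K : Set (ℝ × ℝ)} {a b : ℝ × ℝ} (h : Reach K a b) :
    ArcReach K a b ∨ ArcReach K b a := by
  obtain ⟨γ, hγ, ha, hb⟩ := h
  rcases le_total (a.1 + a.2) (b.1 + b.2) with hs | hs
  · exact .inl (Reach.arcReach ⟨γ, hγ, ha, hb⟩ hs)
  · exact .inr (Reach.arcReach ⟨γ, hγ, hb, ha⟩ hs)

namespace ArcReach

variable {K : Set (ℝ × ℝ)} {a b c d : ℝ × ℝ}

theorem reach (h : ArcReach K a b) : Reach K a b := by
  obtain ⟨φ, hφ⟩ := h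
  refine ⟨φ '' Icc (a.1 + a.2) (b.1 + b.2), ⟨?_, ?_, ?_⟩,
    ⟨_, left_mem_Icc.2 hφ.sum_le, hφ.apply_left⟩, ⟨_, right_mem_Icc.2 hφ.sum_le, hφ.apply_right⟩⟩
  · rintro _ ⟨σ, -, rfl⟩
    exact hφ.mem σ
  · exact (isConnected_Icc hφ.sum_le).image _ hφ.lipschitz.continuous.continuousOn
  · rintro _ ⟨σ, -, rfl⟩ _ ⟨τ, -, rfl⟩
    rcases le_total σ τ with h | h
    · obtain ⟨h1, h2⟩ := hφ.monotone h
      exact mul_nonneg_of_nonpos_of_nonpos (sub_nonpos.2 h1) (sub_nonpos.2 h2)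
    · obtain ⟨h1, h2⟩ := hφ.monotone h
      exact mul_nonneg (sub_nonneg.2 h1) (sub_nonneg.2 h2)

theorem exists_mem_cellT_union_cellR {i j : ℕ} (h : ArcReach K a b) (ha : a ∈ cellD i j)
    (hb : (i : ℝ) ≤ b.1 ∨ (j : ℝ) ≤ b.2) :
    ∃ w ∈ cellT i j ∪ cellR i j, ArcReach K a w ∧ ArcReach K w b := by
  obtain ⟨φ, hφ⟩ := h
  set g : ℝ → ℝ := fun σ => max ((φ σ).1 - i) ((φ σ).2 - j)
  have hg : Continuous g := by
    have := hφ.lipschitz.continuous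
    fun_prop
  have hga : g (a.1 + a.2) ≤ 0 := by
    simp only [g, hφ.apply_left]
    exact max_le (by linarith [ha.1.2]) (by linarith [ha.2.2])
  have hgb : 0 ≤ g (b.1 + b.2) := by
    simp only [g, hφ.apply_right]
    rcases hb with hb | hb
    exacts [le_max_of_le_left (by linarith), le_max_of_le_right (by linarith)]
  obtain ⟨σ, hσ, hgσ⟩ := intermediate_value_Icc hφ.sum_le hg.continuousOn ⟨hga, hgb⟩
  refine ⟨φ σ, ?_, hφ.arcReach_left hσ, hφ.arcReach_right hσ⟩
  have haw := hφ.le_apply hσ.1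
  have h1 := le_max_left ((φ σ).1 - i) ((φ σ).2 - j)
  have h2 := le_max_right ((φ σ).1 - i) ((φ σ).2 - j)
  simp only [g] at hgσ
  rcases max_choice ((φ σ).1 - i) ((φ σ).2 - j) with hc | hc <;> rw [hc] at hgσ
  · exact .inr ⟨mem_singleton_iff.2 (by linarith), by linarith [ha.2.1, haw.2], by linarith⟩
  · exact .inl ⟨⟨by linarith [ha.1.1, haw.1], by linarith⟩, mem_singleton_iff.2 (by linarith)⟩

/-- The arcs `a → b` and `c → d` must cross, and the crossing point links `c` to `b`. -/
theorem of_prec_of_prec (hab : ArcReach K a b) (hcd : ArcReach K c d) (hac : prec a c)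
    (hdb : prec d b) : ArcReach K c b := by
  have hab' := hab.le
  have hcd' := hcd.le
  obtain ⟨φ, hφ⟩ := hab
  obtain ⟨χ, hχ⟩ := hcd
  set σ₀ := max (a.1 + a.2) (c.1 + c.2)
  set σ₁ := min (b.1 + b.2) (d.1 + d.2)
  have h01 : σ₀ ≤ σ₁ := by
    have := hab'.1; have := hab'.2; have := hcd'.1; have := hcd'.2
    have := hac.1; have := hac.2; have := hdb.1; have := hdb.2
    exact max_le (le_min (by linarith) (by linarith)) (le_min (by linarith) (by linarith))
  have hφ₀ := hφ.sum_apply σ₀ ⟨le_max_left _ _, h01.trans (min_le_left _ _)⟩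
  have hχ₀ := hχ.sum_apply σ₀ ⟨le_max_right _ _, h01.trans (min_le_right _ _)⟩
  have hφ₁ := hφ.sum_apply σ₁ ⟨(le_max_left _ _).trans h01, min_le_left _ _⟩
  have hχ₁ := hχ.sum_apply σ₁ ⟨(le_max_right _ _).trans h01, min_le_right _ _⟩
  have hΔ₀ : (φ σ₀).1 - (χ σ₀).1 ≤ 0 := by
    have haφ : a ≤ φ σ₀ := hφ.le_apply (le_max_left _ _)
    have hcχ : c ≤ χ σ₀ := hχ.le_apply (le_max_right _ _)
    rcases le_total (a.1 + a.2) (c.1 + c.2) with h | h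
    · have e : χ σ₀ = c := by rw [show σ₀ = c.1 + c.2 from max_eq_right h, hχ.apply_left]
      rw [e] at hχ₀ ⊢
      linarith [haφ.2, hac.2]
    · have e : φ σ₀ = a := by rw [show σ₀ = a.1 + a.2 from max_eq_left h, hφ.apply_left]
      rw [e]
      linarith [hcχ.1, hac.1]
  have hΔ₁ : 0 ≤ (φ σ₁).1 - (χ σ₁).1 := by
    have hφb : φ σ₁ ≤ b := hφ.apply_le (min_le_left _ _)
    have hχd : χ σ₁ ≤ d := hχ.apply_le (min_le_right _ _)
    rcases le_total (b.1 + b.2) (d.1 + d.2) with h | h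
    · have e : φ σ₁ = b := by rw [show σ₁ = b.1 + b.2 from min_eq_left h, hφ.apply_right]
      rw [e]
      linarith [hχd.1, hdb.1]
    · have e : χ σ₁ = d := by rw [show σ₁ = d.1 + d.2 from min_eq_right h, hχ.apply_right]
      rw [e] at hχ₁ ⊢
      linarith [hφb.2, hdb.2]
  have hcont : Continuous fun σ => (φ σ).1 - (χ σ).1 := by
    have := hφ.lipschitz.continuous
    have := hχ.lipschitz.continuous
    fun_prop
  obtain ⟨σ, hσ, hΔσ⟩ := intermediate_value_Icc h01 hcont.continuousOn ⟨hΔ₀, hΔ₁⟩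
  have hσφ : σ ∈ Icc (a.1 + a.2) (b.1 + b.2) :=
    ⟨(le_max_left _ _).trans hσ.1, hσ.2.trans (min_le_left _ _)⟩
  have hσχ : σ ∈ Icc (c.1 + c.2) (d.1 + d.2) :=
    ⟨(le_max_right _ _).trans hσ.1, hσ.2.trans (min_le_right _ _)⟩
  have hmeet : χ σ = φ σ := by
    have := hφ.sum_apply σ hσφ
    have := hχ.sum_apply σ hσχ
    exact Prod.ext (by linarith) (by linarith)
  exact (hχ.arcReach_left hσχ).trans (hmeet ▸ hφ.arcReach_right hσφ)

end ArcReach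

theorem IsMonoArc.of_tendsto {ι : Type*} {l : Filter ι} [l.NeBot] {K : Set (ℝ × ℝ)}
    (hK : IsClosed K) {a b : ι → ℝ × ℝ} {a₀ b₀ : ℝ × ℝ} {φ : ι → ℝ → ℝ × ℝ} {ψ : ℝ → ℝ × ℝ}
    (ha : Tendsto a l (𝓝 a₀)) (hb : Tendsto b l (𝓝 b₀))
    (hφ : ∀ᶠ y in l, IsMonoArc K (a y) (b y) (φ y))
    (hψ : ∀ σ, Tendsto (fun y => φ y σ) l (𝓝 (ψ σ))) : IsMonoArc K a₀ b₀ ψ := by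
  have hsum : Continuous fun p : ℝ × ℝ => p.1 + p.2 := continuous_fst.add continuous_snd
  have hsa := (hsum.tendsto a₀).comp ha
  have hsb := (hsum.tendsto b₀).comp hb
  -- the arcs are uniformly 1-Lipschitz, so the parameter may move with `y`
  have hmove : ∀ {s : ι → ℝ} {σ : ℝ}, Tendsto s l (𝓝 σ) →
      Tendsto (fun y => φ y (s y)) l (𝓝 (ψ σ)) := fun {s σ} hs => by
    have hdist : Tendsto (fun y => dist σ (s y)) l (𝓝 0) := by
      simpa using (tendsto_const_nhds : Tendsto (fun _ => σ) l (𝓝 σ)).dist hs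
    refine (hψ σ).congr_dist (squeeze_zero' (Eventually.of_forall fun _ => dist_nonneg)
      (hφ.mono fun y hy => ?_) hdist)
    simpa using hy.lipschitz.dist_le_mul σ (s y)
  have hleft := hmove hsa
  have hright := hmove hsb
  refine ⟨fun σ τ hστ => le_of_tendsto_of_tendsto (hψ σ) (hψ τ)
      (hφ.mono fun y hy => hy.monotone hστ),
    LipschitzWith.of_dist_le_mul fun σ τ => le_of_tendsto ((hψ σ).dist (hψ τ))
      (hφ.mono fun y hy => hy.lipschitz.dist_le_mul σ τ),
    fun σ => hK.mem_of_tendsto (hψ σ) (hφ.mono fun y hy => hy.mem σ),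
    le_of_tendsto_of_tendsto hsa hsb (hφ.mono fun y hy => hy.sum_le),
    tendsto_nhds_unique hleft (ha.congr' (hφ.mono fun y hy => hy.apply_left.symm)),
    tendsto_nhds_unique hright (hb.congr' (hφ.mono fun y hy => hy.apply_right.symm)),
    fun σ hσ => ?_⟩
  have hclamp : Tendsto (fun y => max ((a y).1 + (a y).2) (min ((b y).1 + (b y).2) σ)) l
      (𝓝 σ) := by
    simpa only [Function.comp_def, min_eq_right hσ.2, max_eq_right hσ.1] using
      hsa.max (hsb.min (tendsto_const_nhds : Tendsto (fun _ => σ) l (𝓝 σ)))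
  refine tendsto_nhds_unique ((hsum.tendsto _).comp (hmove hclamp)) (hclamp.congr' ?_)
  filter_upwards [hφ] with y hy
  exact (hy.sum_apply _ ⟨le_max_left _ _, max_le hy.sum_le (min_le_left _ _)⟩).symm

theorem isClosed_setOf_arcReach {K : Set (ℝ × ℝ)} (hK : IsCompact K) :
    IsClosed {x : (ℝ × ℝ) × (ℝ × ℝ) | ArcReach K x.1 x.2} := by
  refine isClosed_iff_ultrafilter.2 fun x u hux hu => ?_
  have : ∀ y : (ℝ × ℝ) × (ℝ × ℝ), ∃ φ, ArcReach K y.1 y.2 → IsMonoArc K y.1 y.2 φ :=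
    fun y => by
      by_cases hy : ArcReach K y.1 y.2
      exacts [hy.imp fun _ h _ => h, ⟨fun _ => 0, fun h => absurd h hy⟩]
  choose φ hφ using this
  have hφu : ∀ᶠ y in (u : Filter _), IsMonoArc K y.1 y.2 (φ y) := Filter.mem_of_superset hu hφ
  have hlim : ∀ σ, ∃ z ∈ K, Tendsto (fun y => φ y σ) u (𝓝 z) := fun σ =>
    hK.ultrafilter_le_nhds (u.map _) (le_principal_iff.2 (hφu.mono fun y hy => hy.mem σ))
  choose ψ _ hψ using hlim
  exact ⟨ψ, IsMonoArc.of_tendsto hK.isClosed ((continuous_fst.tendsto x).mono_left hux)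
    ((continuous_snd.tendsto x).mono_left hux) hφu hψ⟩

section Curve

variable {k : ℕ} (x : ℕ → EuclideanSpace ℝ (Fin k))

theorem fCurve_natCast (l : ℕ) : fCurve x l = x l := by
  simp [fCurve]

theorem fCurve_eq_of_mem_Icc {l : ℕ} {u : ℝ} (hu : u ∈ Icc (l : ℝ) (l + 1)) :
    fCurve x u = x l + (u - l) • (x (l + 1) - x l) := by
  rcases hu.2.eq_or_lt with rfl | hlt
  · have := fCurve_natCast x (l + 1)
    push_cast at this
    rw [this]
    module
  · have hfl : ⌊u⌋ = l := Int.floor_eq_iff.2 ⟨by exact_mod_cast hu.1, by exact_mod_cast hlt⟩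
    rw [fCurve, Int.fract, hfl, Int.toNat_natCast]
    push_cast
    module

theorem exists_affine_fCurve (l : ℕ) :
    ∃ a b : EuclideanSpace ℝ (Fin k), ∀ u ∈ Icc (l : ℝ) (l + 1), fCurve x u = a + u • b :=
  ⟨x l - (l : ℝ) • (x (l + 1) - x l), x (l + 1) - x l, fun u hu => by
    rw [fCurve_eq_of_mem_Icc x hu]
    module⟩

variable {x} {m : ℕ}

theorem fCurveExt_eq_of_le (hx : x m = x 0) {u : ℝ} (hu : (m : ℝ) ≤ u) :
    fCurveExt m x u = fCurve x (u - m) := by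
  unfold fCurveExt
  split_ifs with h
  · obtain rfl : u = m := le_antisymm h hu
    rw [sub_self, fCurve_natCast, hx]
    simpa using (fCurve_natCast x 0).symm
  · rfl

theorem exists_affine_fCurveExt (hx : x m = x 0) (l : ℕ) :
    ∃ a b : EuclideanSpace ℝ (Fin k), ∀ u ∈ Icc (l : ℝ) (l + 1), fCurveExt m x u = a + u • b := by
  rcases le_or_gt m l with hml | hlm
  · obtain ⟨l', rfl⟩ := Nat.exists_eq_add_of_le hml
    obtain ⟨a, b, hab⟩ := exists_affine_fCurve x l'
    refine ⟨a - (m : ℝ) • b, b, fun u hu => ?_⟩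
    push_cast at hu
    rw [fCurveExt_eq_of_le hx (by linarith [hu.1]), hab _ ⟨by linarith [hu.1], by linarith [hu.2]⟩]
    module
  · obtain ⟨a, b, hab⟩ := exists_affine_fCurve x l
    refine ⟨a, b, fun u hu => ?_⟩
    have hum : u ≤ m := hu.2.trans (by exact_mod_cast hlm)
    rw [fCurveExt, if_pos hum, hab u hu]

end Curve

section FreeSpace

variable {k m n : ℕ} {x : ℕ → EuclideanSpace ℝ (Fin k)} (y : ℕ → EuclideanSpace ℝ (Fin k))
  (ε : ℝ)

theorem isClosed_and_convex_Dfree_inter_cellD (hx : x m = x 0) {i j : ℕ} (hi : 1 ≤ i)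
    (hj : 1 ≤ j) :
    IsClosed (Dfree m n x y ε ∩ cellD i j) ∧ Convex ℝ (Dfree m n x y ε ∩ cellD i j) := by
  obtain ⟨l, rfl⟩ := Nat.exists_eq_add_of_le' hi
  obtain ⟨l', rfl⟩ := Nat.exists_eq_add_of_le' hj
  obtain ⟨a, b, hab⟩ := exists_affine_fCurveExt hx l
  obtain ⟨c, d, hcd⟩ := exists_affine_fCurve y l'
  let ℓ : ℝ × ℝ →ₗ[ℝ] EuclideanSpace ℝ (Fin k) :=
    (LinearMap.fst ℝ ℝ ℝ).smulRight b - (LinearMap.snd ℝ ℝ ℝ).smulRight d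
  have hcell : cellD (l + 1) (l' + 1) = Icc (l : ℝ) (l + 1) ×ˢ Icc (l' : ℝ) (l' + 1) := by
    simp [cellD]
  have hdist : ∀ p ∈ cellD (l + 1) (l' + 1),
      dist (fCurveExt m x p.1) (fCurve y p.2) = dist (ℓ p) (c - a) := by
    rw [hcell]
    rintro p ⟨hp1, hp2⟩
    rw [hab _ hp1, hcd _ hp2, dist_eq_norm, dist_eq_norm]
    congr 1
    simp only [ℓ, LinearMap.sub_apply, LinearMap.smulRight_apply, LinearMap.fst_apply,
      LinearMap.snd_apply]
    abel
  have hrepr : Dfree m n x y ε ∩ cellD (l + 1) (l' + 1) =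
      Dfull m n ∩ cellD (l + 1) (l' + 1) ∩ ℓ ⁻¹' Metric.closedBall (c - a) ε := by
    ext p
    simp only [Dfree, mem_inter_iff, mem_ofPred_eq, mem_preimage, Metric.mem_closedBall]
    exact ⟨fun ⟨⟨hD, hε⟩, hp⟩ => ⟨⟨hD, hp⟩, hdist p hp ▸ hε⟩,
      fun ⟨⟨hD, hp⟩, hε⟩ => ⟨⟨hD, (hdist p hp).symm ▸ hε⟩, hp⟩⟩
  rw [hrepr]
  exact ⟨((isClosed_Icc.prod isClosed_Icc).inter (isClosed_Icc.prod isClosed_Icc)).inter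
      (Metric.isClosed_closedBall.preimage ℓ.continuous_of_finiteDimensional),
    (((convex_Icc _ _).prod (convex_Icc _ _)).inter ((convex_Icc _ _).prod (convex_Icc _ _))).inter
      ((convex_closedBall _ _).linear_preimage ℓ)⟩

theorem isCompact_Dfree (hx : x m = x 0) : IsCompact (Dfree m n x y ε) := by
  have hcover : Dfree m n x y ε =
      ⋃ i ∈ Iio (2 * m + 1), ⋃ j ∈ Iio (n + 1), Dfree m n x y ε ∩ cellD (i + 1) (j + 1) := by
    refine Subset.antisymm (fun p hp => ?_) (iUnion₂_subset fun _ _ => iUnion₂_subset fun _ _ =>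
      inter_subset_left)
    obtain ⟨⟨h10, h12⟩, h20, h22⟩ := hp.1
    simp only [mem_iUnion, mem_Iio]
    refine ⟨⌊p.1⌋₊, (Nat.floor_lt h10).2 (by push_cast; linarith), ⌊p.2⌋₊,
      (Nat.floor_lt h20).2 (by push_cast; linarith), hp, ?_, ?_⟩ <;>
      simp only [Nat.cast_add, Nat.cast_one, add_sub_cancel_right] <;>
      exact ⟨Nat.floor_le (by assumption), (Nat.lt_floor_add_one _).le⟩
  refine (isCompact_Icc.prod isCompact_Icc).of_isClosed_subset ?_ fun _ hp => hp.1
  rw [hcover]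
  exact (finite_Iio _).isClosed_biUnion fun i _ => (finite_Iio _).isClosed_biUnion fun j _ =>
    (isClosed_and_convex_Dfree_inter_cellD y ε hx (Nat.le_add_left 1 i) (Nat.le_add_left 1 j)).1

end FreeSpace

section Cell

variable {i j : ℕ}

theorem cellT_union_cellR_subset_cellD : cellT i j ∪ cellR i j ⊆ cellD i j := by
  rintro q (⟨h1, h2⟩ | ⟨h1, h2⟩) <;> rw [mem_singleton_iff] at *
  · exact ⟨h1, by rw [h2]; exact ⟨by linarith, le_rfl⟩⟩
  · exact ⟨by rw [h1]; exact ⟨by linarith, le_rfl⟩, h2⟩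

theorem cellL_union_cellB_subset_cellD : cellL i j ∪ cellB i j ⊆ cellD i j := by
  rintro q (⟨h1, h2⟩ | ⟨h1, h2⟩) <;> rw [mem_singleton_iff] at *
  · exact ⟨by rw [h1]; exact ⟨le_rfl, by linarith⟩, h2⟩
  · exact ⟨h1, by rw [h2]; exact ⟨le_rfl, by linarith⟩⟩

theorem isClosed_cellT_union_cellR : IsClosed (cellT i j ∪ cellR i j) :=
  (isClosed_Icc.prod isClosed_singleton).union (isClosed_singleton.prod isClosed_Icc)

theorem prec_of_sub_le {q q' : ℝ × ℝ} (hq' : q' ∈ cellT i j ∪ cellR i j)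
    (hq : q ∈ cellT i j ∪ cellR i j) (h : q'.1 - q'.2 ≤ q.1 - q.2) : prec q' q := by
  simp only [cellT, cellR, mem_union, mem_prod, mem_singleton_iff, mem_Icc] at hq hq'
  rcases hq' with ⟨⟨h1, h1'⟩, h2⟩ | ⟨h1, h2, h2'⟩ <;>
    rcases hq with ⟨⟨g1, g1'⟩, g2⟩ | ⟨g1, g2, g2'⟩ <;> constructor <;> linarith

end Cell

section Pointer

variable {m n : ℕ} {K : Set (ℝ × ℝ)}

theorem mem_gUp_iff (hKD : K ⊆ Dfull m n) {p : ℝ × ℝ} :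
    p ∈ gUp m n K ↔ ∃ t ∈ Tside m n, ArcReach K p t := by
  constructor
  · rintro ⟨hp, t, ht, hpt⟩
    rcases hpt.arcReach_or_arcReach with h | h
    · exact ⟨t, ht, h⟩
    · have hp2 : p.2 = n := le_antisymm (hKD hp).2.2 (mem_singleton_iff.1 ht.2 ▸ h.le.2)
      exact ⟨p, ⟨(hKD hp).1, hp2⟩, ArcReach.refl hp⟩
  · rintro ⟨t, ht, h⟩
    exact ⟨h.left_mem, t, ht, h.reach⟩

theorem isCompact_gUp (hK : IsCompact K) (hKD : K ⊆ Dfull m n) : IsCompact (gUp m n K) := by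
  have : gUp m n K = Prod.fst '' ({x | ArcReach K x.1 x.2} ∩ K ×ˢ Tside m n) := by
    ext p
    rw [mem_gUp_iff hKD]
    constructor
    · rintro ⟨t, ht, h⟩
      exact ⟨(p, t), ⟨h, h.left_mem, ht⟩, rfl⟩
    · rintro ⟨⟨p, t⟩, ⟨h, -, ht⟩, rfl⟩
      exact ⟨t, ht, h⟩
  rw [this]
  exact ((hK.prod (isCompact_Icc.prod isCompact_singleton)).inter_left
    (isClosed_setOf_arcReach hK)).image continuous_fst

theorem le_rUp {p : ℝ × ℝ} {u : ℝ} (hu : u ∈ Icc (0 : ℝ) (2 * m)) (h : Reach K p (u, n)) :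
    u ≤ rUp m n K p :=
  le_csSup (bddAbove_Icc.mono fun _ hv => hv.1) ⟨hu, h⟩

theorem rUp_le {p : ℝ × ℝ} (hp : p ∈ gUp m n K) {r : ℝ}
    (h : ∀ u ∈ Icc (0 : ℝ) (2 * m), Reach K p (u, n) → u ≤ r) : rUp m n K p ≤ r := by
  obtain ⟨⟨t, n'⟩, ⟨ht, hn'⟩, hpt⟩ := hp.2
  obtain rfl : n' = n := hn'
  exact csSup_le ⟨t, ht, hpt⟩ fun u hu => h u hu.1 hu.2

theorem rUp_le_rUp_of_arcReach (hKD : K ⊆ Dfull m n) {p q : ℝ × ℝ} (hpq : ArcReach K p q)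
    (hq : q ∈ gUp m n K) : rUp m n K q ≤ rUp m n K p := by
  refine rUp_le hq fun u hu hqu => ?_
  rcases hqu.arcReach_or_arcReach with h | h
  · exact le_rUp hu (hpq.trans h).reach
  · have hq2 : q.2 = n := le_antisymm (hKD hpq.right_mem).2.2 h.le.2
    calc u ≤ q.1 := h.le.1
      _ ≤ rUp m n K p := le_rUp (hKD hpq.right_mem).1 (by rw [← hq2]; exact hpq.reach)

variable {i j : ℕ}

theorem exists_greatest_of_mem_gUp (hK : IsCompact K) (hKD : K ⊆ Dfull m n) (hj : (j : ℝ) ≤ n)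
    {p : ℝ × ℝ} (hp : p ∈ gUp m n K) (hpc : p ∈ cellD i j) :
    ∃ q ∈ gUp m n K ∩ (cellT i j ∪ cellR i j), p ≤ q ∧
      ∀ q' ∈ gUp m n K ∩ (cellT i j ∪ cellR i j), p ≤ q' → prec q' q := by
  set S := {q ∈ gUp m n K ∩ (cellT i j ∪ cellR i j) | p ≤ q}
  have hS : IsCompact S :=
    ((isCompact_gUp hK hKD).inter_right isClosed_cellT_union_cellR).inter_right
      (isClosed_le continuous_const continuous_id)
  have hSne : S.Nonempty := by
    obtain ⟨t, ht, hpt⟩ := (mem_gUp_iff hKD).1 hp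
    obtain ⟨w, hw, hpw, hwt⟩ :=
      hpt.exists_mem_cellT_union_cellR hpc (.inr (mem_singleton_iff.1 ht.2 ▸ hj))
    exact ⟨w, ⟨(mem_gUp_iff hKD).2 ⟨t, ht, hwt⟩, hw⟩, hpw.le⟩
  obtain ⟨q, hqS, hmax⟩ :=
    hS.exists_isMaxOn hSne (continuous_fst.sub continuous_snd).continuousOn
  exact ⟨q, hqS.1, hqS.2, fun q' hq' hpq' => prec_of_sub_le hq'.2 hqS.1.2 (hmax ⟨hq', hpq'⟩)⟩

theorem rUp_le_rUp_of_greatest (hKD : K ⊆ Dfull m n) (hj : (j : ℝ) ≤ n) {p q : ℝ × ℝ}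
    (hp : p ∈ gUp m n K) (hpc : p ∈ cellD i j) (hq : q ∈ gUp m n K) (hpq : p ≤ q)
    (hgreat : ∀ q' ∈ gUp m n K ∩ (cellT i j ∪ cellR i j), p ≤ q' → prec q' q) :
    rUp m n K p ≤ rUp m n K q := by
  obtain ⟨⟨b, n'⟩, ⟨hb, hn'⟩, hqt⟩ := (mem_gUp_iff hKD).1 hq
  obtain rfl : n' = n := hn'
  have hbq := le_rUp hb hqt.reach
  refine rUp_le hp fun u hu hpu => ?_
  rcases le_total u b with hub | hbu
  · exact hub.trans hbq
  rcases hpu.arcReach_or_arcReach with h | h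
  · obtain ⟨w, hw, hpw, hwu⟩ := h.exists_mem_cellT_union_cellR hpc (.inr hj)
    have hwq := hgreat w ⟨(mem_gUp_iff hKD).2 ⟨_, ⟨hu, mem_singleton _⟩, hwu⟩, hw⟩ hpw.le
    exact le_rUp hu (hwu.of_prec_of_prec hqt hwq ⟨hbu, le_rfl⟩).reach
  · exact (h.le.1.trans (hpq.1.trans hqt.le.1)).trans hbq

end Pointer

theorem stmt12_general
    (k m n : ℕ)
    (x y : ℕ → EuclideanSpace ℝ (Fin k)) (hx : x m = x 0)
    (ε : ℝ)
    (Dε : Set (ℝ × ℝ)) (hDε : Dε = Dfree m n x y ε)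
    (i j : ℕ) (hi1 : 1 ≤ i) (hj1 : 1 ≤ j) (hj2 : j ≤ n) :
    ∀ p ∈ gUp m n Dε ∩ (cellL i j ∪ cellB i j),
      ∃ q : ℝ × ℝ,
        (q ∈ gUp m n Dε ∩ (cellT i j ∪ cellR i j) ∧ p.1 ≤ q.1 ∧ p.2 ≤ q.2) ∧
        (∀ q' : ℝ × ℝ,
          q' ∈ gUp m n Dε ∩ (cellT i j ∪ cellR i j) → p.1 ≤ q'.1 → p.2 ≤ q'.2 →
            prec q' q) ∧
        rUp m n Dε p = rUp m n Dε q := by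
  subst hDε
  rintro p ⟨hp, hpLB⟩
  have hKD : Dfree m n x y ε ⊆ Dfull m n := fun _ h => h.1
  have hj : (j : ℝ) ≤ n := by exact_mod_cast hj2
  have hpc := cellL_union_cellB_subset_cellD hpLB
  obtain ⟨q, hq, hpq, hgreat⟩ := exists_greatest_of_mem_gUp (isCompact_Dfree y ε hx) hKD hj hp hpc
  have hpq' : ArcReach _ p q :=
    .of_convex (isClosed_and_convex_Dfree_inter_cellD y ε hx hi1 hj1).2 inter_subset_left
      ⟨hp.1, hpc⟩ ⟨hq.1.1, cellT_union_cellR_subset_cellD hq.2⟩ hpq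
  refine ⟨q, ⟨hq, hpq⟩, fun q' hq' h1 h2 => hgreat q' hq' ⟨h1, h2⟩, le_antisymm ?_ ?_⟩
  · exact rUp_le_rUp_of_greatest hKD hj hp hpc hq.1 hpq hgreat
  · exact rUp_le_rUp_of_arcReach hKD hpq' hq.1

theorem stmt12
    (k m n : ℕ) (hk : 1 ≤ k) (hm : 1 ≤ m) (hn : 1 ≤ n)
    (x y : ℕ → EuclideanSpace ℝ (Fin k)) (hx : x m = x 0) (hy : y n = y 0)
    (ε : ℝ) (hε : 0 ≤ ε)
    (Dε : Set (ℝ × ℝ)) (hDε : Dε = Dfree m n x y ε)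
    (i j : ℕ) (hi1 : 1 ≤ i) (hi2 : i ≤ 2*m) (hj1 : 1 ≤ j) (hj2 : j ≤ n) :
    ∀ p ∈ gUp m n Dε ∩ (cellL i j ∪ cellB i j),
      ∃ q : ℝ × ℝ,
        (q ∈ gUp m n Dε ∩ (cellT i j ∪ cellR i j) ∧ p.1 ≤ q.1 ∧ p.2 ≤ q.2) ∧
        (∀ q' : ℝ × ℝ,
          q' ∈ gUp m n Dε ∩ (cellT i j ∪ cellR i j) → p.1 ≤ q'.1 → p.2 ≤ q'.2 →
            prec q' q) ∧
        rUp m n Dε p = rUp m n Dε q :=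
  stmt12_general k m n x y hx ε Dε hDε i j hi1 hj1 hj2
end
end

section
/- For each i ∈ {1,…,2m} and j ∈ {1,…,n}, the pointer r↑ is constant on g↑ ∩ B_ij: for any two points (u,j−1), (u',j−1) ∈ g↑ ∩ B_ij, r↑(u,j−1) = r↑(u',j−1). -/
open Set

noncomputable section

/-! Write `c = j - 1` and let `u ≤ u'`. Over one cell the curve `f_X` is affine, so the free
space meets the line `v = c` in a convex set and the segment from `(u, c)` to `(u', c)` is free;
prefixing it to monotone paths gives `r↑(u', c) ≤ r↑(u, c)`. Conversely, a monotone path from `(u, c)` to `(a, n)` and one from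
`(u', c)` to `(w, n)` with `w ≤ a` must cross; following the second up to the crossing and the
first afterwards shows that `(u', c)` reaches `(a, n)` as well.

Monotone paths are exactly the connected chains for the product order on `ℝ × ℝ`. A chain is
the graph of a `1`-Lipschitz function over the antidiagonal coordinate `u + v`, which turns the
crossing into an intermediate value argument. -/

section Curve

variable {k m : ℕ} {x : ℕ → EuclideanSpace ℝ (Fin k)}

lemma fCurve_natCast_s14 (x : ℕ → EuclideanSpace ℝ (Fin k)) (a : ℕ) : fCurve x a = x a := by
  simp [fCurve]

lemma fCurve_eq_lineMap (x : ℕ → EuclideanSpace ℝ (Fin k)) {a : ℕ} {t : ℝ}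
    (ht : t ∈ Icc (a : ℝ) (a + 1)) :
    fCurve x t = AffineMap.lineMap (x a) (x (a + 1)) (t - a) := by
  rcases ht.2.eq_or_lt with rfl | hlt
  · rw [show (a : ℝ) + 1 = ((a + 1 : ℕ) : ℝ) by push_cast; ring, fCurve_natCast_s14]
    simp
  · have hfloor : ⌊t⌋ = a := Int.floor_eq_iff.2 ⟨by exact_mod_cast ht.1, by push_cast; exact hlt⟩
    simp [fCurve, AffineMap.lineMap_apply_module, Int.fract, hfloor]

lemma fCurveExt_of_le (hx : x m = x 0) {t : ℝ} (ht : (m : ℝ) ≤ t) :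
    fCurveExt m x t = fCurve x (t - m) := by
  rcases ht.eq_or_lt with rfl | hlt
  · simp [fCurveExt, fCurve, hx]
  · rw [fCurveExt, if_neg hlt.not_ge]

/-- The closing condition `x m = x 0` makes the extended curve affine on the cell
`[m, m + 1]` as well. -/
lemma fCurveExt_eq_lineMap (hx : x m = x 0) (a : ℕ) :
    ∃ A B : EuclideanSpace ℝ (Fin k), ∀ t ∈ Icc (a : ℝ) (a + 1),
      fCurveExt m x t = AffineMap.lineMap A B (t - a) := by
  rcases lt_or_ge a m with ham | hma
  · refine ⟨x a, x (a + 1), fun t ht => ?_⟩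
    have htm : t ≤ m := ht.2.trans (by exact_mod_cast ham)
    rw [fCurveExt, if_pos htm, fCurve_eq_lineMap x ht]
  · refine ⟨x (a - m), x (a - m + 1), fun t ht => ?_⟩
    have hcast : ((a - m : ℕ) : ℝ) = a - m := Nat.cast_sub hma
    have hmt : (m : ℝ) ≤ t := le_trans (by exact_mod_cast hma) ht.1
    have ht' : t - m ∈ Icc ((a - m : ℕ) : ℝ) ((a - m : ℕ) + 1) := by
      rw [hcast]; exact ⟨by linarith [ht.1], by linarith [ht.2]⟩
    rw [fCurveExt_of_le hx hmt, fCurve_eq_lineMap x ht', hcast, sub_sub_sub_cancel_right]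

lemma fCurveExt_mem_segment (hx : x m = x 0) {a : ℕ} {u u' s : ℝ} (hu : (a : ℝ) ≤ u)
    (hu' : u' ≤ a + 1) (hs : s ∈ Icc u u') :
    fCurveExt m x s ∈ segment ℝ (fCurveExt m x u) (fCurveExt m x u') := by
  obtain ⟨A, B, hAB⟩ := fCurveExt_eq_lineMap hx a
  have hcell : Icc u u' ⊆ Icc (a : ℝ) (a + 1) := Icc_subset_Icc hu hu'
  have huu : u ≤ u' := hs.1.trans hs.2
  rw [hAB s (hcell hs), hAB u (hcell ⟨le_rfl, huu⟩), hAB u' (hcell ⟨huu, le_rfl⟩),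
    ← image_segment, segment_eq_Icc (by linarith)]
  exact mem_image_of_mem _ ⟨by linarith [hs.1], by linarith [hs.2]⟩

lemma Icc_prod_singleton_subset_Dfree {n : ℕ} {y : ℕ → EuclideanSpace ℝ (Fin k)} {ε : ℝ}
    (hx : x m = x 0) {a : ℕ} {u u' c : ℝ} (hu : (a : ℝ) ≤ u) (hu' : u' ≤ a + 1)
    (hp : (u, c) ∈ Dfree m n x y ε) (hp' : (u', c) ∈ Dfree m n x y ε) :
    Icc u u' ×ˢ {c} ⊆ Dfree m n x y ε := by
  rintro ⟨s, c'⟩ ⟨hs, rfl⟩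
  refine ⟨⟨⟨hp.1.1.1.trans hs.1, hs.2.trans hp'.1.1.2⟩, hp.1.2⟩, ?_⟩
  exact Metric.mem_closedBall.1 <| (convex_closedBall (fCurve y c') ε).segment_subset
    (Metric.mem_closedBall.2 hp.2) (Metric.mem_closedBall.2 hp'.2)
    (fCurveExt_mem_segment hx hu hu' hs)

end Curve

namespace Prod

lemma sub_mul_sub_nonneg_iff {p q : ℝ × ℝ} :
    0 ≤ (p.1 - q.1) * (p.2 - q.2) ↔ p ≤ q ∨ q ≤ p := by
  simp only [mul_nonneg_iff, sub_nonneg, sub_nonpos, Prod.le_def]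
  tauto

end Prod

lemma isMonPath_iff {Dε γ : Set (ℝ × ℝ)} :
    IsMonPath Dε γ ↔ γ ⊆ Dε ∧ IsConnected γ ∧ IsChain (· ≤ ·) γ := by
  refine and_congr_right' (and_congr_right' ⟨fun h p hp q hq _ => ?_, fun h p hp q hq => ?_⟩)
  · exact Prod.sub_mul_sub_nonneg_iff.1 (h p hp q hq)
  · rcases eq_or_ne p q with rfl | hpq
    · simp
    · exact Prod.sub_mul_sub_nonneg_iff.2 (h hp hq hpq)

namespace IsChain

variable {γ : Set (ℝ × ℝ)}

lemma le_of_add_le (hγ : IsChain (· ≤ ·) γ) {p q : ℝ × ℝ} (hp : p ∈ γ) (hq : q ∈ γ)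
    (h : p.1 + p.2 ≤ q.1 + q.2) : p ≤ q := by
  rcases hγ.total hp hq with hpq | hqp
  · exact hpq
  · obtain ⟨h1, h2⟩ := Prod.le_def.1 hqp
    exact Prod.le_def.2 ⟨by linarith, by linarith⟩

lemma le_of_snd_lt (hγ : IsChain (· ≤ ·) γ) {p q : ℝ × ℝ} (hp : p ∈ γ) (hq : q ∈ γ)
    (h : p.2 < q.2) : p ≤ q :=
  (hγ.total hp hq).resolve_right fun hqp => h.not_ge hqp.2

/-- Clamping to `[p, q]` retracts the chain onto `γ ∩ Icc p q`. -/
lemma isConnected_inter_Icc (hγ : IsChain (· ≤ ·) γ) (hconn : IsConnected γ) {p q : ℝ × ℝ}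
    (hp : p ∈ γ) (hq : q ∈ γ) (hpq : p ≤ q) : IsConnected (γ ∩ Icc p q) := by
  have himage : (fun z => (z ⊔ p) ⊓ q) '' γ = γ ∩ Icc p q := by
    ext z
    constructor
    · rintro ⟨z, hz, rfl⟩
      rcases hγ.total hz hp with hzp | hpz
      · simp [sup_eq_right.2 hzp, hp, hpq]
      rcases hγ.total hz hq with hzq | hqz
      · simp [hz, hpz, hzq]
      · simp [sup_eq_left.2 hpz, inf_eq_right.2 hqz, hq, hpq]
    · rintro ⟨hz, hpz, hzq⟩
      exact ⟨z, hz, by simp [sup_eq_left.2 hpz, inf_eq_left.2 hzq]⟩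
  rw [← himage]
  refine hconn.image _ (Continuous.continuousOn ?_)
  change Continuous fun z : ℝ × ℝ => (min (max z.1 p.1) q.1, min (max z.2 p.2) q.2)
  fun_prop

lemma lipschitzOnWith_fst_invFunOn (hγ : IsChain (· ≤ ·) γ) :
    LipschitzOnWith 1 (fun t => (Function.invFunOn (fun p : ℝ × ℝ => p.1 + p.2) γ t).1)
      ((fun p : ℝ × ℝ => p.1 + p.2) '' γ) := by
  set ψ := Function.invFunOn (fun p : ℝ × ℝ => p.1 + p.2) γ
  have hstep : ∀ s ∈ (fun p : ℝ × ℝ => p.1 + p.2) '' γ, ∀ t ∈ (fun p : ℝ × ℝ => p.1 + p.2) '' γ,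
      s ≤ t → (ψ s).1 ≤ (ψ t).1 ∧ (ψ t).1 - (ψ s).1 ≤ t - s := by
    intro s hs t ht hst
    have hψs := Function.invFunOn_eq hs
    have hψt := Function.invFunOn_eq ht
    obtain ⟨h1, h2⟩ := Prod.le_def.1 <| hγ.le_of_add_le (Function.invFunOn_mem hs)
      (Function.invFunOn_mem ht) (by rw [hψs, hψt]; exact hst)
    exact ⟨h1, by linarith⟩
  refine LipschitzOnWith.mk_one fun s hs t ht => ?_
  rw [Real.dist_eq, Real.dist_eq]
  rcases le_total s t with hst | hts
  · obtain ⟨h1, h2⟩ := hstep s hs t ht hst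
    rw [abs_of_nonpos (by linarith), abs_of_nonpos (by linarith)]
    linarith
  · obtain ⟨h1, h2⟩ := hstep t ht s hs hts
    rw [abs_of_nonneg (by linarith), abs_of_nonneg (by linarith)]
    linarith

end IsChain

lemma exists_mem_inter_of_crossing {γ₁ γ₂ : Set (ℝ × ℝ)} (hγ₁ : IsChain (· ≤ ·) γ₁)
    (hconn₁ : IsConnected γ₁) (hγ₂ : IsChain (· ≤ ·) γ₂) (hconn₂ : IsConnected γ₂)
    {u u' w a c d : ℝ} (hu : u ≤ u') (hw : w ≤ a) (hcd : c < d)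
    (h₁ : (u, c) ∈ γ₁) (h₁' : (a, d) ∈ γ₁) (h₂ : (u', c) ∈ γ₂) (h₂' : (w, d) ∈ γ₂) :
    ∃ z ∈ γ₁ ∩ γ₂, (u', c) ≤ z ∧ z ≤ (w, d) := by
  set φ : ℝ × ℝ → ℝ := fun p => p.1 + p.2
  set ψ := Function.invFunOn φ γ₁
  have hlow : (u', c) ≤ (w, d) := hγ₂.le_of_snd_lt h₂ h₂' hcd
  set C := γ₂ ∩ Icc (u', c) (w, d)
  have hC : IsConnected C := hγ₂.isConnected_inter_Icc hconn₂ h₂ h₂' hlow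
  have hrange : ∀ z ∈ Icc (u', c) (w, d), φ z ∈ Icc (u + c) (a + d) := fun z hz =>
    ⟨by linarith [hz.1.1, hz.1.2], by linarith [hz.2.1, hz.2.2]⟩
  have hJ : Icc (u + c) (a + d) ⊆ φ '' γ₁ :=
    (hconn₁.image φ (by fun_prop)).isPreconnected.ordConnected.out
      (mem_image_of_mem φ h₁) (mem_image_of_mem φ h₁')
  have hψ : ∀ z ∈ Icc (u', c) (w, d), ψ (φ z) ∈ γ₁ ∧ φ (ψ (φ z)) = φ z := fun z hz =>
    ⟨Function.invFunOn_mem (hJ (hrange z hz)), Function.invFunOn_eq (hJ (hrange z hz))⟩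
  -- `g z` is the horizontal offset of `z ∈ γ₂` from `γ₁` along the antidiagonal through `z`
  set g : ℝ × ℝ → ℝ := fun z => z.1 - (ψ (φ z)).1
  have hg : ContinuousOn g C := continuousOn_fst.sub
    (hγ₁.lipschitzOnWith_fst_invFunOn.continuousOn.comp (by fun_prop)
      fun z hz => hJ (hrange z hz.2))
  have hg_start : 0 ≤ g (u', c) := by
    obtain ⟨hmem, hsum⟩ := hψ (u', c) ⟨le_rfl, hlow⟩
    have := (hγ₁.le_of_add_le h₁ hmem (by simp only [φ] at hsum ⊢; linarith)).2
    simp only [g, φ] at hsum this ⊢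
    linarith
  have hg_end : g (w, d) ≤ 0 := by
    obtain ⟨hmem, hsum⟩ := hψ (w, d) ⟨hlow, le_rfl⟩
    have := (hγ₁.le_of_add_le hmem h₁' (by simp only [φ] at hsum ⊢; linarith)).2
    simp only [g, φ] at hsum this ⊢
    linarith
  obtain ⟨z, hzC, hgz⟩ := hC.isPreconnected.intermediate_value ⟨h₂', hlow, le_rfl⟩
    ⟨h₂, le_rfl, hlow⟩ hg ⟨hg_end, hg_start⟩
  obtain ⟨hmem, hsum⟩ := hψ z hzC.2
  have hz : ψ (φ z) = z := by
    simp only [g, φ] at hgz hsum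
    exact Prod.ext (by linarith) (by linarith)
  exact ⟨z, ⟨hz ▸ hmem, hzC.1⟩, hzC.2⟩

lemma Reach.le_of_snd_lt {Dε : Set (ℝ × ℝ)} {p q : ℝ × ℝ} (h : Reach Dε p q) (hpq : p.2 < q.2) :
    p ≤ q := by
  obtain ⟨γ, hγ, hp, hq⟩ := h
  exact (isMonPath_iff.1 hγ).2.2.le_of_snd_lt hp hq hpq

lemma Reach.trans_of_le {Dε : Set (ℝ × ℝ)} {p z q : ℝ × ℝ} (h₁ : Reach Dε p z)
    (h₂ : Reach Dε z q) (hpz : p ≤ z) (hzq : z ≤ q) : Reach Dε p q := by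
  obtain ⟨γ₁, hγ₁, hp₁, hz₁⟩ := h₁
  obtain ⟨γ₂, hγ₂, hz₂, hq₂⟩ := h₂
  obtain ⟨hsub₁, hconn₁, hchain₁⟩ := isMonPath_iff.1 hγ₁
  obtain ⟨hsub₂, hconn₂, hchain₂⟩ := isMonPath_iff.1 hγ₂
  refine ⟨γ₁ ∩ Icc p z ∪ γ₂ ∩ Icc z q, isMonPath_iff.2 ⟨?_, ?_, ?_⟩,
    Or.inl ⟨hp₁, le_rfl, hpz⟩, Or.inr ⟨hq₂, hzq, le_rfl⟩⟩
  · exact union_subset (inter_subset_left.trans hsub₁) (inter_subset_left.trans hsub₂)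
  · exact IsConnected.union ⟨z, ⟨hz₁, hpz, le_rfl⟩, ⟨hz₂, le_rfl, hzq⟩⟩
      (hchain₁.isConnected_inter_Icc hconn₁ hp₁ hz₁ hpz)
      (hchain₂.isConnected_inter_Icc hconn₂ hz₂ hq₂ hzq)
  · rintro s (hs | hs) t (ht | ht) hst
    · exact hchain₁ hs.1 ht.1 hst
    · exact Or.inl (hs.2.2.trans ht.2.1)
    · exact Or.inr (ht.2.2.trans hs.2.1)
    · exact hchain₂ hs.1 ht.1 hst

lemma reach_of_Icc_prod_singleton_subset {Dε : Set (ℝ × ℝ)} {u u' c : ℝ} (huu : u ≤ u')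
    (hseg : Icc u u' ×ˢ {c} ⊆ Dε) : Reach Dε (u, c) (u', c) := by
  refine ⟨Icc u u' ×ˢ {c}, isMonPath_iff.2 ⟨hseg, (isConnected_Icc huu).prod isConnected_singleton,
    ?_⟩, ⟨⟨le_rfl, huu⟩, rfl⟩, ⟨⟨huu, le_rfl⟩, rfl⟩⟩
  rintro ⟨s, _⟩ ⟨-, rfl⟩ ⟨t, _⟩ ⟨-, rfl⟩ -
  simp only [Prod.mk_le_mk, le_refl, and_true]
  exact le_total s t

lemma Reach.of_crossing {Dε : Set (ℝ × ℝ)} {u u' w a c d : ℝ} (hu : u ≤ u') (hw : w ≤ a)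
    (hcd : c < d) (h₁ : Reach Dε (u, c) (a, d)) (h₂ : Reach Dε (u', c) (w, d)) :
    Reach Dε (u', c) (a, d) := by
  obtain ⟨γ₁, hγ₁, hp₁, hq₁⟩ := h₁
  obtain ⟨γ₂, hγ₂, hp₂, hq₂⟩ := h₂
  obtain ⟨-, hconn₁, hchain₁⟩ := isMonPath_iff.1 hγ₁
  obtain ⟨-, hconn₂, hchain₂⟩ := isMonPath_iff.1 hγ₂
  obtain ⟨z, ⟨hz₁, hz₂⟩, hlo, hhi⟩ :=
    exists_mem_inter_of_crossing hchain₁ hconn₁ hchain₂ hconn₂ hu hw hcd hp₁ hq₁ hp₂ hq₂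
  exact Reach.trans_of_le ⟨γ₂, hγ₂, hp₂, hz₂⟩ ⟨γ₁, hγ₁, hz₁, hq₁⟩ hlo
    (hhi.trans (Prod.mk_le_mk.2 ⟨hw, le_rfl⟩))

lemma rUp_eq_of_Icc_prod_singleton_subset {m n : ℕ} {Dε : Set (ℝ × ℝ)} {u u' c : ℝ}
    (huu : u ≤ u') (hc : c < n) (hseg : Icc u u' ×ˢ {c} ⊆ Dε)
    (hu : (u, c) ∈ gUp m n Dε) (hu' : (u', c) ∈ gUp m n Dε) :
    rUp m n Dε (u, c) = rUp m n Dε (u', c) := by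
  set S : ℝ × ℝ → Set ℝ := fun p => {a | a ∈ Icc (0 : ℝ) (2 * m) ∧ Reach Dε p (a, n)}
  have hbdd : ∀ p, BddAbove (S p) := fun p => ⟨2 * m, fun a ha => ha.1.2⟩
  have hne : ∀ p ∈ gUp m n Dε, (S p).Nonempty := by
    rintro p ⟨-, ⟨a, _⟩, ⟨ha, rfl⟩, hreach⟩
    exact ⟨a, ha, hreach⟩
  obtain ⟨w, hw⟩ := hne _ hu'
  apply le_antisymm
  · refine csSup_le (hne _ hu) fun a ⟨ha, hreach⟩ => ?_
    rcases le_total a w with haw | hwa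
    · exact haw.trans (le_csSup (hbdd _) hw)
    · exact le_csSup (hbdd _) ⟨ha, hreach.of_crossing huu hwa hc hw.2⟩
  · refine csSup_le_csSup (hbdd _) ⟨w, hw⟩ fun a ⟨ha, hreach⟩ => ⟨ha, ?_⟩
    exact (reach_of_Icc_prod_singleton_subset huu hseg).trans_of_le hreach
      (Prod.mk_le_mk.2 ⟨huu, le_rfl⟩) (hreach.le_of_snd_lt hc)

theorem stmt14_general
    (k m n : ℕ)
    (x y : ℕ → EuclideanSpace ℝ (Fin k)) (hx : x m = x 0)
    (ε : ℝ)
    (Dε : Set (ℝ × ℝ)) (hDε : Dε = Dfree m n x y ε)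
    (i j : ℕ) (hi1 : 1 ≤ i) (hj2 : j ≤ n) :
    ∀ u u' : ℝ, (u, (j:ℝ)-1) ∈ gUp m n Dε ∩ cellB i j →
      (u', (j:ℝ)-1) ∈ gUp m n Dε ∩ cellB i j →
      rUp m n Dε (u, (j:ℝ)-1) = rUp m n Dε (u', (j:ℝ)-1) := by
  intro u u' hu hu'
  wlog huu : u ≤ u' generalizing u u'
  · exact (this u' u hu' hu (le_of_not_ge huu)).symm
  have hc : (j : ℝ) - 1 < n := by linarith [show (j : ℝ) ≤ n by exact_mod_cast hj2]
  have hcell : ((i - 1 : ℕ) : ℝ) = i - 1 := by rw [Nat.cast_sub hi1, Nat.cast_one]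
  obtain ⟨hu, ⟨hiu, -⟩, -⟩ := hu
  obtain ⟨hu', ⟨-, hui'⟩, -⟩ := hu'
  refine rUp_eq_of_Icc_prod_singleton_subset huu hc ?_ hu hu'
  subst hDε
  exact Icc_prod_singleton_subset_Dfree hx (a := i - 1) (by rw [hcell]; exact hiu)
    (by rw [hcell]; linarith) hu.1 hu'.1

theorem stmt14
    (k m n : ℕ) (hk : 1 ≤ k) (hm : 1 ≤ m) (hn : 1 ≤ n)
    (x y : ℕ → EuclideanSpace ℝ (Fin k)) (hx : x m = x 0) (hy : y n = y 0)
    (ε : ℝ) (hε : 0 ≤ ε)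
    (Dε : Set (ℝ × ℝ)) (hDε : Dε = Dfree m n x y ε)
    (i j : ℕ) (hi1 : 1 ≤ i) (hi2 : i ≤ 2*m) (hj1 : 1 ≤ j) (hj2 : j ≤ n) :
    ∀ u u' : ℝ, (u, (j:ℝ)-1) ∈ gUp m n Dε ∩ cellB i j →
      (u', (j:ℝ)-1) ∈ gUp m n Dε ∩ cellB i j →
      rUp m n Dε (u, (j:ℝ)-1) = rUp m n Dε (u', (j:ℝ)-1) :=
  stmt14_general k m n x y hx ε Dε hDε i j hi1 hj2
end
end
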